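/- Let ∇ be the Type A connection on ℝ² with Christoffel symbols Γ₁₁¹ = −1, Γ₁₁² = 0, Γ₁₂¹ = 1, Γ₁₂² = 0, Γ₂₂¹ = 0, Γ₂₂² = 2 (the surface 𝓜₁). Then a smooth vector field X on ℝ² is an affine Killing field for ∇ if and only if X lies in the real span of the four vector fields e^{x¹}∂₁, x²e^{x¹}∂₁, ∂₁, ∂₂. -/

import Mathlib

noncomputable section

/-- The coordinate directions of ℝ². -/
def ee : Fin 2 → ℝ × ℝ := ![(1, 0), (0, 1)]

/-- Partial derivative `∂_i f`. -/
def pd (i : Fin 2) (f : ℝ × ℝ → ℝ) : ℝ × ℝ → ℝ :=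
  fun p => fderiv ℝ f p (ee i)

/-- Affine Killing vector field for a Type A connection (constant Christoffel symbols). -/
def IsKillingA (Γ : Fin 2 → Fin 2 → Fin 2 → ℝ) (X : Fin 2 → ℝ × ℝ → ℝ) : Prop :=
  ∀ i j k : Fin 2, ∀ p : ℝ × ℝ,
    pd i (pd j (X k)) p
      + ∑ l, (Γ l j k * pd i (X l) p + Γ i l k * pd j (X l) p - Γ i j l * pd l (X k) p) = 0

/- ### Auxiliary lemmas -/

lemma ee0 : ee 0 = (1,0) := rfl
lemma ee1 : ee 1 = (0,1) := rfl

lemma pd_of_hasFDerivAt {f : ℝ×ℝ → ℝ} {L : ℝ×ℝ →L[ℝ] ℝ} {p : ℝ×ℝ}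
    (h : HasFDerivAt f L p) (i : Fin 2) : pd i f p = L (ee i) := by
  rw [pd, h.fderiv]

lemma pd_contDiff {f : ℝ×ℝ → ℝ} (hf : ContDiff ℝ (⊤ : ℕ∞) f) (i : Fin 2) :
    ContDiff ℝ (⊤ : ℕ∞) (pd i f) :=
  (hf.fderiv_right (by simp)).clm_apply contDiff_const

lemma clm_zero (L : ℝ×ℝ →L[ℝ] ℝ) (h0 : L (1,0) = 0) (h1 : L (0,1) = 0) : L = 0 := by
  apply ContinuousLinearMap.ext
  rintro ⟨x, y⟩
  have hxy : (x, y) = x • ((1:ℝ),(0:ℝ)) + y • ((0:ℝ),(1:ℝ)) := by simp [Prod.ext_iff]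
  rw [hxy, map_add, map_smul, map_smul, h0, h1]; simp

lemma pd_comm {f : ℝ×ℝ → ℝ} (hf : ContDiff ℝ (⊤ : ℕ∞) f) (i j : Fin 2) (p : ℝ×ℝ) :
    pd i (pd j f) p = pd j (pd i f) p := by
  have hd : DifferentiableAt ℝ (fderiv ℝ f) p :=
    ((hf.fderiv_right (m := 1) (WithTop.coe_le_coe.mpr le_top)).differentiable one_ne_zero) p
  have key : ∀ v : ℝ×ℝ, ∀ w : ℝ×ℝ,
      fderiv ℝ (fun q => fderiv ℝ f q v) p w = fderiv ℝ (fderiv ℝ f) p w v := by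
    intro v w
    have h := fderiv_clm_apply (c := fderiv ℝ f) (u := fun _ => v) hd (differentiableAt_const v)
    simp only [fderiv_fun_const, Pi.zero_apply] at h
    rw [h]; simp
  have hsymm : IsSymmSndFDerivAt ℝ f p := (hf.contDiffAt).isSymmSndFDerivAt (by simp only [minSmoothness_of_isRCLikeNormedField]; exact WithTop.coe_le_coe.mpr (le_top : (2:ℕ∞) ≤ ⊤))
  show fderiv ℝ (fun q => fderiv ℝ f q (ee j)) p (ee i)
      = fderiv ℝ (fun q => fderiv ℝ f q (ee i)) p (ee j)
  rw [key, key]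
  exact hsymm (ee i) (ee j)

lemma const_of {f : ℝ×ℝ → ℝ} (hf : Differentiable ℝ f)
    (h0 : ∀ p, pd 0 f p = 0) (h1 : ∀ p, pd 1 f p = 0) (p : ℝ×ℝ) : f p = f (0,0) := by
  apply is_const_of_fderiv_eq_zero hf
  intro q
  exact clm_zero _ (h0 q) (h1 q)

lemma pd_sub {f g : ℝ×ℝ → ℝ} (hf : Differentiable ℝ f) (hg : Differentiable ℝ g)
    (i : Fin 2) (p : ℝ×ℝ) : pd i (fun q => f q - g q) p = pd i f p - pd i g p := by
  have := pd_of_hasFDerivAt (((hf p).hasFDerivAt).sub ((hg p).hasFDerivAt)) i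
  rw [show (fun q => f q - g q) = f - g from rfl, this]; simp [pd]

lemma pd_cmul {f : ℝ×ℝ → ℝ} (hf : Differentiable ℝ f) (c : ℝ)
    (i : Fin 2) (p : ℝ×ℝ) : pd i (fun q => c * f q) p = c * pd i f p := by
  have := pd_of_hasFDerivAt (((hf p).hasFDerivAt).const_mul c) i
  rw [this]; simp [pd]

lemma pd_zero (i : Fin 2) (p : ℝ×ℝ) : pd i (fun _ : ℝ×ℝ => (0:ℝ)) p = 0 := by
  simp [pd]

lemma hE (c : ℝ) (p : ℝ×ℝ) :
    HasFDerivAt (fun q : ℝ×ℝ => c * Real.exp q.1)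
      (c • (Real.exp p.1 • (ContinuousLinearMap.fst ℝ ℝ ℝ))) p :=
  ((hasFDerivAt_fst).exp).const_mul c

lemma hY (c : ℝ) (p : ℝ×ℝ) :
    HasFDerivAt (fun q : ℝ×ℝ => c * (q.2 * Real.exp q.1))
      (c • (p.2 • (Real.exp p.1 • (ContinuousLinearMap.fst ℝ ℝ ℝ))
        + Real.exp p.1 • (ContinuousLinearMap.snd ℝ ℝ ℝ))) p :=
  ((hasFDerivAt_snd).mul ((hasFDerivAt_fst).exp)).const_mul c

lemma pd0E (c : ℝ) (p : ℝ×ℝ) :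
    pd 0 (fun q : ℝ×ℝ => c * Real.exp q.1) p = c * Real.exp p.1 := by
  rw [pd_of_hasFDerivAt (hE c p) 0]; simp [ee0]

lemma pd1E (c : ℝ) (p : ℝ×ℝ) :
    pd 1 (fun q : ℝ×ℝ => c * Real.exp q.1) p = 0 := by
  rw [pd_of_hasFDerivAt (hE c p) 1]; simp [ee1]

lemma pd0Y (c : ℝ) (p : ℝ×ℝ) :
    pd 0 (fun q : ℝ×ℝ => c * (q.2 * Real.exp q.1)) p = c * (p.2 * Real.exp p.1) := by
  rw [pd_of_hasFDerivAt (hY c p) 0]; simp [ee0]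

lemma pd1Y (c : ℝ) (p : ℝ×ℝ) :
    pd 1 (fun q : ℝ×ℝ => c * (q.2 * Real.exp q.1)) p = c * Real.exp p.1 := by
  rw [pd_of_hasFDerivAt (hY c p) 1]; simp [ee1]

lemma exp_of {f : ℝ×ℝ → ℝ} (hf : Differentiable ℝ f)
    (h0 : ∀ p, pd 0 f p = f p) (h1 : ∀ p, pd 1 f p = 0) (p : ℝ×ℝ) :
    f p = f (0,0) * Real.exp p.1 := by
  set g : ℝ×ℝ → ℝ := fun q => f q * Real.exp (-q.1) with hgdef
  have hgd : Differentiable ℝ g := hf.mul (((differentiable_fst).neg).exp)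
  have hg' : ∀ q : ℝ×ℝ, HasFDerivAt g
      (f q • (Real.exp (-q.1) • -(ContinuousLinearMap.fst ℝ ℝ ℝ))
        + Real.exp (-q.1) • fderiv ℝ f q) q := by
    intro q
    have hne : HasFDerivAt (fun r : ℝ×ℝ => Real.exp (-r.1))
        (Real.exp (-q.1) • -(ContinuousLinearMap.fst ℝ ℝ ℝ)) q := (hasFDerivAt_fst.neg).exp
    exact (hf q).hasFDerivAt.mul hne
  have hc : ∀ q, g q = g (0,0) := by
    apply const_of hgd
    · intro q
      rw [pd_of_hasFDerivAt (hg' q) 0]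
      have := h0 q
      simp only [pd, ee0] at this
      simp [ee0, this]; ring
    · intro q
      rw [pd_of_hasFDerivAt (hg' q) 1]
      have := h1 q
      simp only [pd, ee1] at this
      simp [ee1, this]
  have := hc p
  simp only [hgdef] at this
  have h2 : f p * Real.exp (-p.1) * Real.exp p.1 = f (0,0) * Real.exp p.1 := by
    rw [this]; simp
  rw [mul_assoc, ← Real.exp_add] at h2
  simpa using h2

/-- The master shape of solutions. -/
def Fm (A B C : ℝ) : ℝ×ℝ → ℝ := fun q => A * Real.exp q.1 + B * (q.2 * Real.exp q.1) + C

lemma hFm (A B C : ℝ) (p : ℝ×ℝ) :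
    HasFDerivAt (Fm A B C)
      ((A • (Real.exp p.1 • (ContinuousLinearMap.fst ℝ ℝ ℝ)))
        + B • (p.2 • (Real.exp p.1 • (ContinuousLinearMap.fst ℝ ℝ ℝ))
            + Real.exp p.1 • (ContinuousLinearMap.snd ℝ ℝ ℝ))) p := by
  have he : HasFDerivAt (fun q : ℝ×ℝ => Real.exp q.1)
      (Real.exp p.1 • (ContinuousLinearMap.fst ℝ ℝ ℝ)) p := (hasFDerivAt_fst).exp
  have hy : HasFDerivAt (fun q : ℝ×ℝ => q.2 * Real.exp q.1)
      (p.2 • (Real.exp p.1 • (ContinuousLinearMap.fst ℝ ℝ ℝ))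
        + Real.exp p.1 • (ContinuousLinearMap.snd ℝ ℝ ℝ)) p :=
    (hasFDerivAt_snd).mul he
  exact ((he.const_mul A).add (hy.const_mul B)).add_const C

lemma pd0Fm (A B C : ℝ) : pd 0 (Fm A B C) = Fm A B 0 := by
  funext p
  rw [pd_of_hasFDerivAt (hFm A B C p) 0]
  simp [ee0, Fm]

lemma pd1Fm (A B C : ℝ) : pd 1 (Fm A B C) = Fm B 0 0 := by
  funext p
  rw [pd_of_hasFDerivAt (hFm A B C p) 1]
  simp [ee1, Fm]

/-- for the surface `𝓜₁` (Γ₁₁¹ = −1, Γ₁₂¹ = 1, Γ₂₂² = 2, other symbols zero),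
a smooth vector field is affine Killing iff it lies in the span of
`e^{x¹}∂₁, x²e^{x¹}∂₁, ∂₁, ∂₂`. -/
theorem stmt8 (Γ : Fin 2 → Fin 2 → Fin 2 → ℝ)
    (hΓ : ∀ i j k, Γ i j k = Γ j i k)
    (g1 : Γ 0 0 0 = -1) (g2 : Γ 0 0 1 = 0) (g3 : Γ 0 1 0 = 1) (g4 : Γ 0 1 1 = 0)
    (g5 : Γ 1 1 0 = 0) (g6 : Γ 1 1 1 = 2)
    (X : Fin 2 → ℝ × ℝ → ℝ) (hX : ∀ k, ContDiff ℝ (⊤ : ℕ∞) (X k)) :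
    IsKillingA Γ X ↔
      ∃ c₁ c₂ c₃ c₄ : ℝ, ∀ p : ℝ × ℝ,
        X 0 p = c₁ * Real.exp p.1 + c₂ * (p.2 * Real.exp p.1) + c₃ ∧ X 1 p = c₄ := by
  have G7 : Γ 1 0 0 = 1 := (hΓ 1 0 0).trans g3
  have G8 : Γ 1 0 1 = 0 := (hΓ 1 0 1).trans g4
  constructor
  · -- forward direction
    intro hK
    set a : ℝ×ℝ → ℝ := X 0 with ha
    set b : ℝ×ℝ → ℝ := X 1 with hb
    have hXa : ContDiff ℝ (⊤ : ℕ∞) a := hX 0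
    have hXb : ContDiff ℝ (⊤ : ℕ∞) b := hX 1
    have dA : ∀ i, Differentiable ℝ (pd i a) := fun i => (pd_contDiff hXa i).differentiable (by simp)
    have dB : ∀ i, Differentiable ℝ (pd i b) := fun i => (pd_contDiff hXb i).differentiable (by simp)
    -- the six Killing equations
    have E1 : ∀ p, pd 0 (pd 0 a) p = pd 0 a p - 2 * pd 0 b p := by
      intro p
      have := hK 0 0 0 p
      simp only [Fin.sum_univ_two, Fin.isValue, g1, g2, g3, g4, g5, g6, G7, G8, ← ha, ← hb] at this
      linarith
    have E3 : ∀ p, pd 0 (pd 1 b) p = - pd 0 b p := by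
      intro p
      have := hK 0 1 1 p
      simp only [Fin.sum_univ_two, Fin.isValue, g1, g2, g3, g4, g5, g6, G7, G8, ← ha, ← hb] at this
      linarith
    have E4 : ∀ p, pd 1 (pd 0 b) p = - pd 0 b p := by
      intro p
      have := hK 1 0 1 p
      simp only [Fin.sum_univ_two, Fin.isValue, g1, g2, g3, g4, g5, g6, G7, G8, ← ha, ← hb] at this
      linarith
    have E5 : ∀ p, pd 1 (pd 1 b) p = -2 * pd 1 b p := by
      intro p
      have := hK 1 1 1 p
      simp only [Fin.sum_univ_two, Fin.isValue, g1, g2, g3, g4, g5, g6, G7, G8, ← ha, ← hb] at this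
      linarith
    have E6 : ∀ p, pd 1 (pd 1 a) p = 0 := by
      intro p
      have := hK 1 1 0 p
      simp only [Fin.sum_univ_two, Fin.isValue, g1, g2, g3, g4, g5, g6, G7, G8, ← ha, ← hb] at this
      linarith
    have E7 : ∀ p, pd 1 (pd 0 a) p = pd 1 a p - pd 1 b p := by
      intro p
      have := hK 1 0 0 p
      simp only [Fin.sum_univ_two, Fin.isValue, g1, g2, g3, g4, g5, g6, G7, G8, ← ha, ← hb] at this
      linarith
    -- step 1 : pd 0 b = 0
    have hu0 : ∀ p, pd 0 b p = 0 := by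
      intro p
      have hcomm := pd_comm (pd_contDiff hXb 1) 1 0 p
      have l1 : pd 0 (pd 1 b) = fun q => -1 * pd 0 b q := by
        funext q; rw [E3 q]; ring
      have l2 : pd 1 (pd 1 b) = fun q => -2 * pd 1 b q := by
        funext q; rw [E5 q]
      rw [l1, l2] at hcomm
      rw [pd_cmul (dB 0) (-1) 1 p, pd_cmul (dB 1) (-2) 0 p] at hcomm
      rw [E4 p, E3 p] at hcomm
      linarith
    -- step 2 : pd 1 b = 0
    have hv0 : ∀ p, pd 1 b p = 0 := by
      intro p
      have hcomm := pd_comm (pd_contDiff hXa 1) 1 0 p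
      have l1 : pd 0 (pd 1 a) = fun q => pd 1 a q - pd 1 b q := by
        funext q
        rw [pd_comm hXa 0 1 q, E7 q]
      have l2 : pd 1 (pd 1 a) = fun _ => (0:ℝ) := by
        funext q; exact E6 q
      rw [l1, l2] at hcomm
      rw [pd_sub (dA 1) (dB 1) 1 p, pd_zero 0 p, E6 p, E5 p] at hcomm
      linarith
    -- b is constant
    have hbconst : ∀ p, b p = b (0,0) :=
      const_of (hXb.differentiable (by simp)) hu0 hv0
    -- w = pd 1 a is c₂ e^x
    set c₂ : ℝ := pd 1 a (0,0) with hc2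
    have hw : ∀ p, pd 1 a p = c₂ * Real.exp p.1 := by
      intro p
      have h0 : ∀ q, pd 0 (pd 1 a) q = pd 1 a q := by
        intro q
        rw [pd_comm hXa 0 1 q, E7 q, hv0 q]; ring
      have := exp_of (dA 1) h0 E6 p
      rw [this, hc2]
    -- t = pd 0 a
    set c₁ : ℝ := pd 0 a (0,0) with hc1
    have ht : ∀ p, pd 0 a p = c₁ * Real.exp p.1 + c₂ * (p.2 * Real.exp p.1) := by
      intro p
      set r : ℝ×ℝ → ℝ := fun q => pd 0 a q - c₂ * (q.2 * Real.exp q.1) with hrdef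
      have hYd : Differentiable ℝ (fun q : ℝ×ℝ => c₂ * (q.2 * Real.exp q.1)) :=
        (differentiable_snd.mul ((differentiable_fst).exp)).const_mul c₂
      have hrd : Differentiable ℝ r := (dA 0).sub hYd
      have hr0 : ∀ q, pd 0 r q = r q := by
        intro q
        rw [hrdef]
        rw [pd_sub (dA 0) hYd 0 q, pd0Y c₂ q, E1 q, hu0 q]
        ring
      have hr1 : ∀ q, pd 1 r q = 0 := by
        intro q
        rw [hrdef]
        rw [pd_sub (dA 0) hYd 1 q, pd1Y c₂ q, E7 q, hv0 q, hw q]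
        ring
      have hre := exp_of hrd hr0 hr1 p
      have hr00 : r (0,0) = c₁ := by simp [hrdef, hc1]
      rw [hr00] at hre
      have hre' : pd 0 a p - c₂ * (p.2 * Real.exp p.1) = c₁ * Real.exp p.1 := hre
      linarith
    -- now a itself
    set c₃ : ℝ := a (0,0) - c₁ with hc3
    refine ⟨c₁, c₂, c₃, b (0,0), ?_⟩
    intro p
    constructor
    · set s : ℝ×ℝ → ℝ :=
        fun q => a q - c₁ * Real.exp q.1 - c₂ * (q.2 * Real.exp q.1) with hsdef
      have hEd : Differentiable ℝ (fun q : ℝ×ℝ => c₁ * Real.exp q.1) :=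
        ((differentiable_fst).exp).const_mul c₁
      have hYd : Differentiable ℝ (fun q : ℝ×ℝ => c₂ * (q.2 * Real.exp q.1)) :=
        (differentiable_snd.mul ((differentiable_fst).exp)).const_mul c₂
      have hsd : Differentiable ℝ s := ((hXa.differentiable (by simp)).sub hEd).sub hYd
      have hs0 : ∀ q, pd 0 s q = 0 := by
        intro q
        rw [hsdef]
        rw [pd_sub (f := fun q => a q - c₁ * Real.exp q.1) ((hXa.differentiable (by simp)).sub hEd) hYd 0 q,
          pd_sub (hXa.differentiable (by simp)) hEd 0 q, pd0E c₁ q, pd0Y c₂ q, ht q]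
        ring
      have hs1 : ∀ q, pd 1 s q = 0 := by
        intro q
        rw [hsdef]
        rw [pd_sub (f := fun q => a q - c₁ * Real.exp q.1) ((hXa.differentiable (by simp)).sub hEd) hYd 1 q,
          pd_sub (hXa.differentiable (by simp)) hEd 1 q, pd1E c₁ q, pd1Y c₂ q, hw q]
        ring
      have hsc := const_of hsd hs0 hs1 p
      have hs00 : s (0,0) = c₃ := by simp [hsdef, hc3]
      rw [hs00] at hsc
      have hsc' : a p - c₁ * Real.exp p.1 - c₂ * (p.2 * Real.exp p.1) = c₃ := hsc
      show a p = _
      linarith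
    · exact hbconst p
  · -- reverse direction
    rintro ⟨c₁, c₂, c₃, c₄, h⟩
    have hX0 : X 0 = Fm c₁ c₂ c₃ := funext fun p => (h p).1
    have hX1 : X 1 = Fm 0 0 c₄ := by
      funext p
      simp [Fm, (h p).2]
    intro i j k p
    fin_cases i <;> fin_cases j <;> fin_cases k <;>
      simp only [Fin.isValue, Fin.mk_zero, Fin.mk_one, Fin.sum_univ_two, hX0, hX1, pd0Fm, pd1Fm,
        g1, g2, g3, g4, g5, g6, G7, G8, Fm] <;> ring
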